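/- Let (X,F) be a symmetric n-ary band that is reducible to an associative binary operation G : X² → X (i.e., F = G^{n−1}). Then: (a) for every x ∈ X the map ℓ_x is an endomorphism of (X,G), i.e., ℓ_x(G(y,z)) = G(ℓ_x(y), ℓ_x(z)) for all y, z ∈ X; (b) ℓ_{G(x,y)} = ℓ_x ∘ ℓ_y = ℓ_{B(x,y)} for all x, y ∈ X; (c) σ is a congruence for G (if x₁ σ y₁ and x₂ σ y₂ then G(x₁,x₂) σ G(y₁,y₂)) and G(x,y) σ B(x,y) for all x, y ∈ X, so the operations induced by G and by B on X/σ coincide. -/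

import Mathlib

namespace NaryBand

variable {X : Type*}

/-- Replace the window of length `n` starting at position `i` (0-based) of the
`(2*n-1)`-tuple `x` by the value of `F` on that window. -/
def contract {n : ℕ} (F : (Fin n → X) → X) (i : ℕ) (hn : 2 ≤ n) (hi : i ≤ n - 1)
    (x : Fin (2 * n - 1) → X) : Fin n → X :=
  fun j =>
    if _h1 : (j : ℕ) < i then x ⟨(j : ℕ), by have := j.isLt; omega⟩
    else if _h2 : (j : ℕ) = i then
      F (fun k => x ⟨i + (k : ℕ), by have := k.isLt; omega⟩)
    else x ⟨(j : ℕ) + n - 1, by have := j.isLt; omega⟩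

/-- `F` is an associative `n`-ary operation. -/
def NAssoc {n : ℕ} (hn : 2 ≤ n) (F : (Fin n → X) → X) : Prop :=
  ∀ (i : ℕ) (hi : i + 1 ≤ n - 1) (x : Fin (2 * n - 1) → X),
    F (contract F i hn (by omega) x) = F (contract F (i + 1) hn (by omega) x)

/-- `F` is a symmetric `n`-ary operation. -/
def NSym {n : ℕ} (F : (Fin n → X) → X) : Prop :=
  ∀ (σ : Equiv.Perm (Fin n)) (x : Fin n → X), F (x ∘ σ) = F x

/-- `F` is an idempotent `n`-ary operation. -/
def NIdem {n : ℕ} (F : (Fin n → X) → X) : Prop :=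
  ∀ x : X, F (fun _ => x) = x

/-- The associated binary operation `B(x,y) = F(x,…,x,y)` (with `n-1` copies of `x`). -/
def assocB {n : ℕ} (F : (Fin n → X) → X) (x y : X) : X :=
  F (fun j => if (j : ℕ) < n - 1 then x else y)

/-- The map `ℓ_x : y ↦ B(x,y)`. -/
def ell {n : ℕ} (F : (Fin n → X) → X) (x : X) : X → X :=
  fun y => assocB F x y

/-- The `n`-ary extension `G^{n-1}(x₁,…,xₙ) = G(x₁, G(x₂, …, G(x_{n-1}, xₙ)…))`
of a binary operation `G`. -/
def nExt {n : ℕ} (hn : 1 ≤ n) (G : X → X → X) (x : Fin n → X) : X :=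
  (List.ofFn (fun i : Fin (n - 1) => x ⟨(i : ℕ), by have := i.isLt; omega⟩)).foldr G
    (x ⟨n - 1, by omega⟩)

/-- The relation `σ`: `x σ y` iff `B(x,y) = y` and `B(y,x) = x`. -/
def sigmaRel {n : ℕ} (F : (Fin n → X) → X) (x y : X) : Prop :=
  assocB F x y = y ∧ assocB F y x = x

/-- `(A, mul)` is an abelian group with identity `e` and inversion `inv`. -/
def IsAbelianGroup {A : Type*} (mul : A → A → A) (e : A) (inv : A → A) : Prop :=
  (∀ a b c, mul (mul a b) c = mul a (mul b c)) ∧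
  (∀ a b, mul a b = mul b a) ∧
  (∀ a, mul e a = a) ∧
  (∀ a, mul (inv a) a = e)

/-- `k`-fold product `a * ⋯ * a` with respect to `mul` (with `powMul mul e 0 a = e`). -/
def powMul {A : Type*} (mul : A → A → A) (e : A) : ℕ → A → A
  | 0, _ => e
  | k + 1, a => mul a (powMul mul e k a)

end NaryBand

open NaryBand

/-!
Write `ℓ_x = (G x)^[n - 1]`, i.e. left multiplication by `x^{n-1}`. Symmetry of `F = G^{n-1}` lets
one swap two adjacent factors inside any window of `n` consecutive factors of a `G`-product, so
every product of at least `n` factors is invariant under permutations. Hence `x^{n-1}` is central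
and `(xy)^{n-1} = x^{n-1} y^{n-1}`, i.e. `ℓ_{G(x,y)} = ℓ_x ∘ ℓ_y`, while idempotence `x^n = x` makes
every `ℓ_x` idempotent. Parts (a), (b) and (c) are short computations with these identities.
-/

namespace NaryBand

section Permutation

variable {α β : Type*} (f : α → β → β) (n : ℕ)

def FoldrPermInvariant : Prop :=
  ∀ ⦃l l' : List α⦄, l.Perm l' → n ≤ l.length → ∀ z, l.foldr f z = l'.foldr f z

variable {f n}

theorem foldr_append_eq_of_perm_of_length_eq
    (hswap : ∀ (p s : List α) (a b : α) (z : β), p.length + s.length + 2 = n →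
      (p ++ a :: b :: s).foldr f z = (p ++ b :: a :: s).foldr f z)
    {l l' : List α} (h : l.Perm l') (p : List α) (hlen : p.length + l.length = n) (z : β) :
    (p ++ l).foldr f z = (p ++ l').foldr f z := by
  induction h generalizing p with
  | nil => rfl
  | cons a _ ih => simpa using ih (p ++ [a]) (by simp at hlen ⊢; omega)
  | swap x y l => exact hswap p l y x z (by simp at hlen; omega)
  | trans h₁ _ ih₁ ih₂ => rw [ih₁ p hlen, ih₂ p (h₁.length_eq ▸ hlen)]

theorem foldrPermInvariant_of_swap (hn : 2 ≤ n)
    (hswap : ∀ (p s : List α) (a b : α) (z : β), p.length + s.length + 2 = n →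
      (p ++ a :: b :: s).foldr f z = (p ++ b :: a :: s).foldr f z) :
    FoldrPermInvariant f n := by
  intro l l' h hlen z
  induction h with
  | nil => rfl
  | @cons a l₁ l₂ h ih =>
    rcases Nat.lt_or_ge l₁.length n with hlt | hle
    · exact foldr_append_eq_of_perm_of_length_eq hswap (h.cons a) [] (by simp at hlen ⊢; omega) z
    · rw [List.foldr_cons, List.foldr_cons, ih hle]
  | swap x y l =>
    -- the swap happens inside the window formed by the first `n` entries
    have key := hswap [] (l.take (n - 2)) y x ((l.drop (n - 2)).foldr f z)
      (by simp at hlen ⊢; omega)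
    simpa only [List.nil_append, ← List.foldr_append, List.cons_append, List.take_append_drop]
      using key
  | trans h₁ _ ih₁ ih₂ => rw [ih₁ hlen, ih₂ (h₁.length_eq ▸ hlen)]

theorem foldr_replicate (a : α) (b : β) (k : ℕ) :
    (List.replicate k a).foldr f b = (f a)^[k] b := by
  induction k with
  | zero => rfl
  | succ k ih => rw [List.replicate_succ, List.foldr_cons, ih, Function.iterate_succ_apply']

theorem perm_flatten_replicate_pair (x y : α) (k : ℕ) :
    (List.replicate k [x, y]).flatten.Perm (List.replicate k x ++ List.replicate k y) := by
  classical
  refine List.perm_iff_count.2 fun a => ?_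
  simp only [List.count_flatten, List.map_replicate, List.sum_replicate, List.count_append,
    List.count_replicate, List.count_cons, List.count_nil, smul_eq_mul, beq_iff_eq]
  split_ifs <;> ring

end Permutation

variable {X : Type*} {n : ℕ}

section Reducible

variable (h : 1 ≤ n) (G : X → X → X)

theorem assocB_nExt (x y : X) : assocB (nExt h G) x y = (G x)^[n - 1] y := by
  simp [assocB, nExt, ← foldr_replicate, List.ofFn_const]

theorem ell_nExt (x : X) : ell (nExt h G) x = (G x)^[n - 1] :=
  funext (assocB_nExt h G x)

variable [Std.Associative G]

theorem foldr_ofFn_eq_nExt (v : Fin n → X) (z : X) :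
    (List.ofFn v).foldr G z = G (nExt h G v) z := by
  obtain ⟨m, rfl⟩ : ∃ m, n = m + 1 := ⟨n - 1, by omega⟩
  rw [List.ofFn_succ', List.concat_eq_append, List.foldr_append, List.foldr_cons, List.foldr_nil,
    List.foldr_assoc]
  rfl

theorem foldr_swap_of_nSym (hS : NSym (nExt h G)) (p s : List X) (a b z : X)
    (hlen : p.length + s.length + 2 = n) :
    (p ++ a :: b :: s).foldr G z = (p ++ b :: a :: s).foldr G z := by
  have hw : (p ++ a :: b :: s).length = n := by simp; omega
  set v : Fin n → X := fun k => (p ++ a :: b :: s)[(k : ℕ)]'(by omega)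
  have hv : List.ofFn v = p ++ a :: b :: s := List.ext_getElem (by simp [hw]) (by simp [v])
  have hvσ : List.ofFn (v ∘ Equiv.swap ⟨p.length, by omega⟩ ⟨p.length + 1, by omega⟩) =
      p ++ b :: a :: s := by
    refine List.ext_getElem (by simp; omega) fun k _ _ => ?_
    simp only [List.getElem_ofFn, Function.comp_apply, v, Equiv.swap_apply_def]
    rcases lt_trichotomy k p.length with hk | rfl | hk
    · simp [Fin.ext_iff, hk.ne, (Nat.lt_succ_of_lt hk).ne, List.getElem_append_left hk]
    · simp
    · rcases (Nat.succ_le_of_lt hk).eq_or_lt with rfl | hk'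
      · simp [Fin.ext_iff]
      · obtain ⟨j, rfl⟩ : ∃ j, k = j + 2 + p.length := ⟨k - p.length - 2, by omega⟩
        simp [Fin.ext_iff, hk'.ne', List.getElem_append_right hk.le]
  rw [← hv, ← hvσ, foldr_ofFn_eq_nExt h, foldr_ofFn_eq_nExt h, hS]

end Reducible

section Iterate

variable {G : X → X → X}

theorem iterate_mul_right [Std.Associative G] (k : ℕ) (x y z : X) :
    (G x)^[k] (G y z) = G ((G x)^[k] y) z := by
  induction k with
  | zero => rfl
  | succ k ih => rw [Function.iterate_succ_apply', ih, Function.iterate_succ_apply',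
      Std.Associative.assoc (op := G)]

theorem iterate_idem [Std.Associative G] (hn : 2 ≤ n) (hidem : ∀ x, (G x)^[n - 1] x = x)
    (x z : X) : (G x)^[n - 1] ((G x)^[n - 1] z) = (G x)^[n - 1] z := by
  obtain ⟨m, hm⟩ : ∃ m, n - 1 = m + 1 := ⟨n - 2, by omega⟩
  rw [hm] at hidem ⊢
  rw [Function.iterate_succ_apply' _ m z, iterate_mul_right, hidem]

theorem iterate_mul_comm (hcomm : FoldrPermInvariant G n) (hn : 1 ≤ n) (x y z : X) :
    (G x)^[n - 1] (G y z) = G y ((G x)^[n - 1] z) := by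
  have := hcomm (List.perm_append_singleton y (List.replicate (n - 1) x)) (by simp; omega) z
  simpa [foldr_replicate] using this

theorem commute_iterate (hcomm : FoldrPermInvariant G n) (hn : 1 ≤ n) (x y : X) :
    Function.Commute ((G x)^[n - 1]) ((G y)^[n - 1]) :=
  Function.Commute.iterate_right (iterate_mul_comm hcomm hn x y) (n - 1)

variable [Std.Associative G]

theorem iterate_mul_eq_comp (hcomm : FoldrPermInvariant G n) (hn : 2 ≤ n) (x y : X) :
    (G (G x y))^[n - 1] = (G x)^[n - 1] ∘ (G y)^[n - 1] := by
  have hGxy : G (G x y) = G x ∘ G y := funext fun z => Std.Associative.assoc (op := G) x y z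
  funext z
  have key := hcomm (perm_flatten_replicate_pair x y (n - 1)) (by simp; omega) z
  rw [List.foldr_flatten, foldr_replicate, List.foldr_append, foldr_replicate,
    foldr_replicate] at key
  rw [hGxy]
  exact key

theorem iterate_iterate_eq_comp (hcomm : FoldrPermInvariant G n) (hn : 2 ≤ n)
    (hidem : ∀ x, (G x)^[n - 1] x = x) (x y : X) :
    (G ((G x)^[n - 1] y))^[n - 1] = (G x)^[n - 1] ∘ (G y)^[n - 1] := by
  have step : ∀ k, (G ((G x)^[k + 1] y))^[n - 1] = (G x)^[n - 1] ∘ (G y)^[n - 1] := by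
    intro k
    induction k with
    | zero => exact iterate_mul_eq_comp hcomm hn x y
    | succ k ih =>
      rw [Function.iterate_succ_apply', iterate_mul_eq_comp hcomm hn, ih, ← Function.comp_assoc]
      congr 1
      exact funext (iterate_idem hn hidem x)
  obtain ⟨m, hm⟩ : ∃ m, n - 1 = m + 1 := ⟨n - 2, by omega⟩
  rw [← step m, hm]

theorem iterate_mul_distrib (hcomm : FoldrPermInvariant G n) (hn : 2 ≤ n)
    (hidem : ∀ x, (G x)^[n - 1] x = x) (x y z : X) :
    (G x)^[n - 1] (G y z) = G ((G x)^[n - 1] y) ((G x)^[n - 1] z) := by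
  rw [← iterate_mul_right (G := G), ← iterate_mul_comm hcomm (by omega), iterate_idem hn hidem]

theorem iterate_mul_of_fixed (hcomm : FoldrPermInvariant G n) (hn : 2 ≤ n) {a b c d : X}
    (hab : (G a)^[n - 1] b = b) (hcd : (G c)^[n - 1] d = d) :
    (G (G a c))^[n - 1] (G b d) = G b d := by
  rw [iterate_mul_eq_comp hcomm hn, Function.comp_apply, iterate_mul_comm hcomm (by omega), hcd,
    iterate_mul_right, hab]

end Iterate

end NaryBand

/-- If a symmetric `n`-ary band `(X,F)` is reducible to an
associative binary operation `G` (i.e. `F = G^{n-1}`), then: (a) every `ℓ_x` is an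
endomorphism of `(X,G)`; (b) `ℓ_{G(x,y)} = ℓ_x ∘ ℓ_y = ℓ_{B(x,y)}`; (c) `σ` is a
congruence for `G` and `G(x,y) σ B(x,y)`, so `G` and `B` induce the same operation
on `X/σ`. -/
theorem stmt_18 {X : Type*} {n : ℕ} (hn : 2 ≤ n) (F : (Fin n → X) → X)
    (hS : NSym F) (hI : NIdem F)
    (G : X → X → X) (hG : ∀ a b c : X, G (G a b) c = G a (G b c))
    (hred : F = nExt (show 1 ≤ n by omega) G) :
    (∀ x y z : X, ell F x (G y z) = G (ell F x y) (ell F x z)) ∧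
    (∀ x y : X, ell F (G x y) = ell F x ∘ ell F y ∧
      ell F (G x y) = ell F (assocB F x y)) ∧
    ((∀ x₁ y₁ x₂ y₂ : X, sigmaRel F x₁ y₁ → sigmaRel F x₂ y₂ →
        sigmaRel F (G x₁ x₂) (G y₁ y₂)) ∧
      ∀ x y : X, sigmaRel F (G x y) (assocB F x y)) := by
  subst hred
  have : Std.Associative G := ⟨hG⟩
  have hidem : ∀ x, (G x)^[n - 1] x = x := fun x => by
    rw [← assocB_nExt (by omega) G]
    simpa only [assocB, ite_self] using hI x
  have hcomm : FoldrPermInvariant G n :=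
    foldrPermInvariant_of_swap hn (foldr_swap_of_nSym _ G hS)
  have hmul := iterate_mul_eq_comp hcomm hn
  simp only [ell_nExt, sigmaRel, assocB_nExt]
  refine ⟨iterate_mul_distrib hcomm hn hidem, fun x y => ⟨hmul x y, ?_⟩,
    fun x₁ y₁ x₂ y₂ h₁ h₂ => ⟨iterate_mul_of_fixed hcomm hn h₁.1 h₂.1,
      iterate_mul_of_fixed hcomm hn h₁.2 h₂.2⟩, fun x y => ⟨?_, ?_⟩⟩
  · rw [hmul, iterate_iterate_eq_comp hcomm hn hidem]
  · rw [hmul, Function.comp_apply, commute_iterate hcomm (by omega) y x y, hidem,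
      iterate_idem hn hidem]
  · rw [iterate_iterate_eq_comp hcomm hn hidem, ← hmul, hidem]
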